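/- Let R = ℂ[x_1,…,x_n], let I ⊆ R be a homogeneous ideal and let g ∈ R be a nonzero homogeneous polynomial of degree e. Then for every d ≥ e, the contraction of the truncated dual space satisfies g∘D_0^d[I] = D_0^{d−e}[I : ⟨g⟩]; that is, { g∘q : q ∈ D_0^d[I] } equals the truncated dual space of order d − e of the colon ideal I : ⟨g⟩. -/

import Mathlib

/-!
Apolarity restricts to a nondegenerate symmetric form on the finite-dimensional space `R_{≤k}`
of polynomials of degree at most `k`, and for this form contraction by `g` is adjoint to
multiplication by `g`. As `I` is homogeneous, a polynomial of degree at most `k` pairs to zero with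
`I` as soon as it does with `I ∩ R_{≤k}`, so `D_0^k[I]` is the orthogonal of `I ∩ R_{≤k}` in
`R_{≤k}`; the colon ideal `I : ⟨g⟩` is homogeneous as well. In finite dimension an adjoint map
sends the orthogonal of `U` onto the orthogonal of the preimage of `U`, and the preimage of
`I ∩ R_{≤d}` under multiplication by `g : R_{≤d-e} → R_{≤d}` is `(I : ⟨g⟩) ∩ R_{≤d-e}`.
-/

open MvPolynomial

noncomputable section

/-- Apolarity pairing `⟨q, f⟩ = ∑ α (coeff α q) * (coeff α f)`. -/
def apair {n : ℕ} (q f : MvPolynomial (Fin n) ℂ) : ℂ :=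
  ∑ α ∈ q.support, q.coeff α * f.coeff α

lemma apair_eq_sum {n : ℕ} {q : MvPolynomial (Fin n) ℂ} {s : Finset (Fin n →₀ ℕ)}
    (h : q.support ⊆ s) (f : MvPolynomial (Fin n) ℂ) :
    apair q f = ∑ α ∈ s, q.coeff α * f.coeff α :=
  Finset.sum_subset h (fun α _ hα => by
    rw [MvPolynomial.notMem_support_iff.mp hα, zero_mul])

/-- The Macaulay dual space `D_0[I]` of an ideal at the origin. -/
def dualSpace {n : ℕ} (I : Ideal (MvPolynomial (Fin n) ℂ)) :
    Submodule ℂ (MvPolynomial (Fin n) ℂ) where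
  carrier := {q | ∀ f ∈ I, apair q f = 0}
  zero_mem' := by intro f hf; simp [apair]
  add_mem' := by
    intro a b ha hb f hf
    have h : apair (a + b) f = apair a f + apair b f := by
      rw [apair_eq_sum (s := a.support ∪ b.support) MvPolynomial.support_add,
        apair_eq_sum (s := a.support ∪ b.support) Finset.subset_union_left,
        apair_eq_sum (s := a.support ∪ b.support) Finset.subset_union_right,
        ← Finset.sum_add_distrib]
      exact Finset.sum_congr rfl fun α _ => by rw [coeff_add, add_mul]
    rw [h, ha f hf, hb f hf, add_zero]
  smul_mem' := by
    intro c q hq f hf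
    have h : apair (c • q) f = c * apair q f := by
      rw [apair_eq_sum (s := q.support) MvPolynomial.support_smul, apair, Finset.mul_sum]
      exact Finset.sum_congr rfl fun α _ => by rw [coeff_smul, smul_eq_mul, mul_assoc]
    rw [h, hq f hf, mul_zero]

open scoped Classical in
/-- The contraction `g ∘ q`, realizing the action of `g` on differential functionals:
`coeff α (contract g q) = ∑ β, coeff β g * coeff (α + β) q`. -/
def contract {n : ℕ} (g q : MvPolynomial (Fin n) ℂ) : MvPolynomial (Fin n) ℂ :=
  ∑ β ∈ g.support, ∑ α ∈ q.support,
    if β ≤ α then monomial (α - β) (g.coeff β * q.coeff α) else 0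

/-- The truncated dual space `D_0^k[I]`. -/
def truncDual {n : ℕ} (k : ℕ) (I : Ideal (MvPolynomial (Fin n) ℂ)) :
    Submodule ℂ (MvPolynomial (Fin n) ℂ) where
  carrier := {q | q ∈ dualSpace I ∧ q.totalDegree ≤ k}
  zero_mem' := ⟨(dualSpace I).zero_mem, by simp⟩
  add_mem' := fun ha hb => ⟨(dualSpace I).add_mem ha.1 hb.1,
    le_trans (MvPolynomial.totalDegree_add _ _) (max_le ha.2 hb.2)⟩
  smul_mem' := fun c q hq => ⟨(dualSpace I).smul_mem c hq.1,
    le_trans (MvPolynomial.totalDegree_smul_le c q) hq.2⟩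

namespace LinearMap.BilinForm

variable {K V W : Type*} [Field K] [AddCommGroup V] [Module K V] [FiniteDimensional K V]
  [AddCommGroup W] [Module K W] [FiniteDimensional K W]

theorem map_orthogonal_eq_orthogonal_comap
    {B : LinearMap.BilinForm K V} {B' : LinearMap.BilinForm K W}
    (hB : B.Nondegenerate) (hB₀ : B.IsRefl) (hB' : B'.Nondegenerate) (hB'₀ : B'.IsRefl)
    {φ : V →ₗ[K] W} {ψ : W →ₗ[K] V} (h : IsAdjointPair B B' φ ψ) (U : Submodule K W) :
    (B'.orthogonal U).map ψ = B.orthogonal (U.comap φ) := by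
  refine le_antisymm ?_ ?_
  · rintro _ ⟨w, hw, rfl⟩ v hv
    exact (h v w).symm.trans (hw _ hv)
  · have hφ : B.orthogonal ((B'.orthogonal U).map ψ) ≤ U.comap φ := by
      intro v hv
      rw [Submodule.mem_comap, ← orthogonal_orthogonal hB' hB'₀ U]
      intro w hw
      exact hB'₀ _ _ ((h v w).trans (hB₀ _ _ (hv _ ⟨w, hw, rfl⟩)))
    calc B.orthogonal (U.comap φ)
        ≤ B.orthogonal (B.orthogonal ((B'.orthogonal U).map ψ)) := orthogonal_le hφ
      _ = (B'.orthogonal U).map ψ := orthogonal_orthogonal hB hB₀ _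

end LinearMap.BilinForm

section Apolarity

variable {n : ℕ}

theorem apair_comm (q f : MvPolynomial (Fin n) ℂ) : apair q f = apair f q := by
  rw [apair_eq_sum (s := q.support ∪ f.support) Finset.subset_union_left,
    apair_eq_sum (s := q.support ∪ f.support) Finset.subset_union_right]
  exact Finset.sum_congr rfl fun α _ => mul_comm _ _

theorem apair_add_left (a b f : MvPolynomial (Fin n) ℂ) :
    apair (a + b) f = apair a f + apair b f := by
  rw [apair_eq_sum (s := a.support ∪ b.support) support_add,
    apair_eq_sum (s := a.support ∪ b.support) Finset.subset_union_left,
    apair_eq_sum (s := a.support ∪ b.support) Finset.subset_union_right,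
    ← Finset.sum_add_distrib]
  exact Finset.sum_congr rfl fun α _ => by rw [coeff_add, add_mul]

theorem apair_smul_left (c : ℂ) (q f : MvPolynomial (Fin n) ℂ) :
    apair (c • q) f = c • apair q f := by
  rw [apair_eq_sum (s := q.support) support_smul, apair, Finset.smul_sum]
  exact Finset.sum_congr rfl fun α _ => by
    rw [coeff_smul, smul_eq_mul, smul_eq_mul, mul_assoc]

theorem apair_monomial_right (q : MvPolynomial (Fin n) ℂ) (α : Fin n →₀ ℕ) (c : ℂ) :
    apair q (monomial α c) = q.coeff α * c := by
  rw [apair_eq_sum (s := {α} ∪ q.support) Finset.subset_union_right, Finset.sum_eq_single α]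
  · rw [coeff_monomial, if_pos rfl]
  · intro β _ hβ
    rw [coeff_monomial, if_neg (Ne.symm hβ), mul_zero]
  · simp

theorem apair_add_right (q a b : MvPolynomial (Fin n) ℂ) :
    apair q (a + b) = apair q a + apair q b := by
  simp only [apair_comm q, apair_add_left]

variable (n) in
def apairForm : LinearMap.BilinForm ℂ (MvPolynomial (Fin n) ℂ) :=
  LinearMap.mk₂ ℂ apair apair_add_left apair_smul_left apair_add_right
    (fun c q f => by simp only [apair_comm q, apair_smul_left])

@[simp]
theorem apairForm_apply (q f : MvPolynomial (Fin n) ℂ) : apairForm n q f = apair q f := rfl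

theorem isRefl_apairForm_restrict (W : Submodule ℂ (MvPolynomial (Fin n) ℂ)) :
    ((apairForm n).restrict W).IsRefl := fun q f h => by
  simpa [apair_comm] using h

theorem nondegenerate_apairForm_restrict_restrictTotalDegree (k : ℕ) :
    ((apairForm n).restrict (restrictTotalDegree (Fin n) ℂ k)).Nondegenerate := by
  refine (LinearMap.IsRefl.nondegenerate_iff_separatingLeft
    (isRefl_apairForm_restrict _)).mpr fun q hq => ?_
  ext α : 2
  by_cases hα : α ∈ (q : MvPolynomial (Fin n) ℂ).support
  · have hmon : monomial α (1 : ℂ) ∈ restrictTotalDegree (Fin n) ℂ k :=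
      (mem_restrictTotalDegree _ _ _).mpr <| (totalDegree_monomial_le α 1).trans <|
        (le_totalDegree hα).trans ((mem_restrictTotalDegree _ _ _).mp q.2)
    simpa [apair_monomial_right] using hq ⟨_, hmon⟩
  · simpa using hα

end Apolarity

section Contraction

variable {n : ℕ}

theorem coeff_contract (g q : MvPolynomial (Fin n) ℂ) (γ : Fin n →₀ ℕ) :
    (contract g q).coeff γ = ∑ β ∈ g.support, g.coeff β * q.coeff (γ + β) := by
  rw [contract, coeff_sum]
  refine Finset.sum_congr rfl fun β _ => ?_
  have hterm : coeff γ (if β ≤ γ + β then monomial (γ + β - β) (g.coeff β * q.coeff (γ + β))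
      else 0) = g.coeff β * q.coeff (γ + β) := by
    rw [if_pos le_add_self, add_tsub_cancel_right, coeff_monomial, if_pos rfl]
  rw [coeff_sum, Finset.sum_eq_single (γ + β)]
  · convert hterm
  · intro α _ hα
    split_ifs with hβα
    · rw [coeff_monomial, if_neg fun h => hα (by rw [← h, tsub_add_cancel_of_le hβα])]
    · exact coeff_zero γ
  · intro h
    convert hterm using 1
    rw [notMem_support_iff.mp h, mul_zero]

theorem coeff_contract_of_support_subset {g : MvPolynomial (Fin n) ℂ}
    {s : Finset (Fin n →₀ ℕ)} (hs : g.support ⊆ s) (q : MvPolynomial (Fin n) ℂ) (γ : Fin n →₀ ℕ) :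
    (contract g q).coeff γ = ∑ β ∈ s, g.coeff β * q.coeff (γ + β) := by
  rw [coeff_contract]
  exact Finset.sum_subset hs fun β _ hβ => by rw [notMem_support_iff.mp hβ, zero_mul]

theorem coeff_contract_monomial (β : Fin n →₀ ℕ) (c : ℂ) (q : MvPolynomial (Fin n) ℂ)
    (γ : Fin n →₀ ℕ) : (contract (monomial β c) q).coeff γ = c * q.coeff (γ + β) := by
  rw [coeff_contract_of_support_subset (support_monomial_subset), Finset.sum_singleton,
    coeff_monomial, if_pos rfl]

theorem contract_add_left (a b q : MvPolynomial (Fin n) ℂ) :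
    contract (a + b) q = contract a q + contract b q := by
  ext γ
  rw [coeff_add, coeff_contract_of_support_subset (s := a.support ∪ b.support) support_add,
    coeff_contract_of_support_subset (s := a.support ∪ b.support) Finset.subset_union_left,
    coeff_contract_of_support_subset (s := a.support ∪ b.support) Finset.subset_union_right,
    ← Finset.sum_add_distrib]
  exact Finset.sum_congr rfl fun β _ => by rw [coeff_add, add_mul]

variable (n) in
def contractLinearMap (g : MvPolynomial (Fin n) ℂ) :
    MvPolynomial (Fin n) ℂ →ₗ[ℂ] MvPolynomial (Fin n) ℂ where
  toFun := contract g
  map_add' a b := by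
    ext γ
    simp only [coeff_add, coeff_contract, ← Finset.sum_add_distrib, mul_add]
  map_smul' c q := by
    ext γ
    simp only [coeff_smul, coeff_contract, smul_eq_mul, RingHom.id_apply, Finset.mul_sum]
    exact Finset.sum_congr rfl fun β _ => by ring

theorem apair_contract (g q f : MvPolynomial (Fin n) ℂ) :
    apair (contract g q) f = apair q (g * f) := by
  induction f using MvPolynomial.induction_on' with
  | add f₁ f₂ h₁ h₂ =>
    rw [mul_add, apair_add_right, apair_add_right, h₁, h₂]
  | monomial γ c =>
    induction g using MvPolynomial.induction_on' with
    | add g₁ g₂ h₁ h₂ =>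
      rw [contract_add_left, apair_add_left, h₁, h₂, add_mul, apair_add_right]
    | monomial β b =>
      rw [apair_monomial_right, coeff_contract_monomial, monomial_mul, apair_monomial_right,
        add_comm γ β]
      ring

theorem totalDegree_contract_le {g : MvPolynomial (Fin n) ℂ} {e : ℕ} (hg : g.IsHomogeneous e)
    {q : MvPolynomial (Fin n) ℂ} {d : ℕ} (hq : q.totalDegree ≤ d) :
    (contract g q).totalDegree ≤ d - e := by
  refine Finset.sup_le fun γ hγ => ?_
  obtain ⟨β, -, hβ⟩ := Finset.exists_ne_zero_of_sum_ne_zero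
    ((coeff_contract g q γ) ▸ mem_support_iff.mp hγ)
  have hβe : β.degree = e := by
    rw [Finsupp.degree_eq_weight_one]
    exact hg (left_ne_zero_of_mul hβ)
  have hγβ : (γ + β).degree ≤ d :=
    (le_totalDegree (mem_support_iff.mpr (right_ne_zero_of_mul hβ))).trans hq
  rw [map_add, hβe] at hγβ
  change γ.degree ≤ d - e
  omega

end Contraction

section Homogeneous

attribute [local instance] MvPolynomial.gradedAlgebra in
theorem homogeneousComponent_mul_of_isHomogeneous_right {σ R : Type*} [CommSemiring R]
    {g : MvPolynomial σ R} {e : ℕ} (hg : g.IsHomogeneous e) (f : MvPolynomial σ R) (m : ℕ) :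
    homogeneousComponent (m + e) (f * g) = homogeneousComponent m f * g := by
  have h := DirectSum.coe_decompose_mul_of_right_mem_of_le (homogeneousSubmodule σ R) (a := f)
    hg (Nat.le_add_left e m)
  rw [Nat.add_sub_cancel] at h
  rwa [← decomposition.decompose'_apply, ← decomposition.decompose'_apply]

theorem homogeneousComponent_mem_colon {σ R : Type*} [CommRing R]
    {I : Ideal (MvPolynomial σ R)} (hI : ∀ f ∈ I, ∀ m : ℕ, homogeneousComponent m f ∈ I)
    {g : MvPolynomial σ R} {e : ℕ} (hg : g.IsHomogeneous e) {f : MvPolynomial σ R}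
    (hf : f ∈ I.colon (Ideal.span {g})) (m : ℕ) :
    homogeneousComponent m f ∈ I.colon (Ideal.span {g}) := by
  rw [Submodule.mem_colon_span_singleton, smul_eq_mul] at hf ⊢
  rw [← homogeneousComponent_mul_of_isHomogeneous_right hg]
  exact hI _ hf _

variable {n : ℕ}

theorem apair_homogeneousComponent_of_totalDegree_lt {q : MvPolynomial (Fin n) ℂ} {i : ℕ}
    (hq : q.totalDegree < i) (f : MvPolynomial (Fin n) ℂ) :
    apair q (homogeneousComponent i f) = 0 :=
  Finset.sum_eq_zero fun α hα => by
    have hα : α.degree < i := (le_totalDegree hα).trans_lt hq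
    rw [coeff_homogeneousComponent, if_neg hα.ne, mul_zero]

theorem mem_truncDual_iff {I : Ideal (MvPolynomial (Fin n) ℂ)}
    (hI : ∀ f ∈ I, ∀ m : ℕ, homogeneousComponent m f ∈ I) {k : ℕ}
    {q : MvPolynomial (Fin n) ℂ} :
    q ∈ truncDual k I ↔
      q.totalDegree ≤ k ∧ ∀ f ∈ I, f.totalDegree ≤ k → apair q f = 0 := by
  refine ⟨fun hq => ⟨hq.2, fun f hf _ => hq.1 f hf⟩, fun ⟨hq, hqI⟩ => ⟨fun f hf => ?_, hq⟩⟩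
  rw [← sum_homogeneousComponent f, ← apairForm_apply, map_sum]
  refine Finset.sum_eq_zero fun i _ => ?_
  rcases le_or_gt i k with hik | hki
  · exact hqI _ (hI f hf i) ((homogeneousComponent_isHomogeneous i f).totalDegree_le.trans hik)
  · exact apair_homogeneousComponent_of_totalDegree_lt (hq.trans_lt hki) f

end Homogeneous

section TruncatedDual

variable {n : ℕ}

theorem truncDual_eq_map_orthogonal {I : Ideal (MvPolynomial (Fin n) ℂ)}
    (hI : ∀ f ∈ I, ∀ m : ℕ, homogeneousComponent m f ∈ I) (k : ℕ) :
    truncDual k I = (((apairForm n).restrict (restrictTotalDegree (Fin n) ℂ k)).orthogonal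
      ((I.restrictScalars ℂ).comap (restrictTotalDegree (Fin n) ℂ k).subtype)).map
        (restrictTotalDegree (Fin n) ℂ k).subtype := by
  ext q
  rw [mem_truncDual_iff hI]
  constructor
  · rintro ⟨hq, hqI⟩
    refine ⟨⟨q, (mem_restrictTotalDegree _ _ _).mpr hq⟩, fun f hf => ?_, rfl⟩
    simpa [apair_comm] using hqI f hf ((mem_restrictTotalDegree _ _ _).mp f.2)
  · rintro ⟨q, hq, rfl⟩
    refine ⟨(mem_restrictTotalDegree _ _ _).mp q.2, fun f hf hfk => ?_⟩
    simpa [apair_comm] using hq ⟨f, (mem_restrictTotalDegree _ _ _).mpr hfk⟩ hf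

variable {g : MvPolynomial (Fin n) ℂ} {e d : ℕ}

def mulRestrict (hg : g.IsHomogeneous e) (hd : e ≤ d) :
    restrictTotalDegree (Fin n) ℂ (d - e) →ₗ[ℂ] restrictTotalDegree (Fin n) ℂ d :=
  (LinearMap.mulLeft ℂ g).restrict fun v hv => by
    rw [mem_restrictTotalDegree] at hv ⊢
    refine (totalDegree_mul g v).trans ?_
    have := hg.totalDegree_le
    omega

def contractRestrict (hg : g.IsHomogeneous e) (d : ℕ) :
    restrictTotalDegree (Fin n) ℂ d →ₗ[ℂ] restrictTotalDegree (Fin n) ℂ (d - e) :=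
  (contractLinearMap n g).restrict fun q hq => by
    rw [mem_restrictTotalDegree] at hq ⊢
    exact totalDegree_contract_le hg hq

theorem isAdjointPair_mulRestrict_contractRestrict (hg : g.IsHomogeneous e) (hd : e ≤ d) :
    LinearMap.IsAdjointPair ((apairForm n).restrict (restrictTotalDegree (Fin n) ℂ (d - e)))
      ((apairForm n).restrict (restrictTotalDegree (Fin n) ℂ d))
      (mulRestrict hg hd) (contractRestrict hg d) := fun v q => by
  change apair (g * (v : MvPolynomial (Fin n) ℂ)) q = apair v (contract g q)
  rw [apair_comm (g * _), ← apair_contract, apair_comm]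

theorem comap_mulRestrict (hg : g.IsHomogeneous e) (hd : e ≤ d)
    (I : Ideal (MvPolynomial (Fin n) ℂ)) :
    ((I.restrictScalars ℂ).comap (restrictTotalDegree (Fin n) ℂ d).subtype).comap
        (mulRestrict hg hd) =
      ((I.colon (Ideal.span {g})).restrictScalars ℂ).comap
        (restrictTotalDegree (Fin n) ℂ (d - e)).subtype := by
  ext v
  simp [mulRestrict, mul_comm]

end TruncatedDual

theorem contract_truncDual_of_homogeneous_general (n : ℕ) (I : Ideal (MvPolynomial (Fin n) ℂ))
    (hI : ∀ f ∈ I, ∀ d : ℕ, homogeneousComponent d f ∈ I)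
    (g : MvPolynomial (Fin n) ℂ) (e : ℕ) (hge : g.IsHomogeneous e)
    (d : ℕ) (hd : e ≤ d) :
    contract g '' (truncDual d I : Set (MvPolynomial (Fin n) ℂ)) =
      (truncDual (d - e) (Submodule.colon I (Ideal.span {g})) :
        Set (MvPolynomial (Fin n) ℂ)) := by
  rw [truncDual_eq_map_orthogonal hI, truncDual_eq_map_orthogonal
    (fun f hf m => homogeneousComponent_mem_colon hI hge hf m), ← comap_mulRestrict hge hd,
    ← LinearMap.BilinForm.map_orthogonal_eq_orthogonal_comap
      (nondegenerate_apairForm_restrict_restrictTotalDegree _) (isRefl_apairForm_restrict _)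
      (nondegenerate_apairForm_restrict_restrictTotalDegree _) (isRefl_apairForm_restrict _)
      (isAdjointPair_mulRestrict_contractRestrict hge hd)]
  simp only [Submodule.map_coe, Set.image_image]
  rfl

/-- For a homogeneous ideal `I` and a nonzero homogeneous `g` of degree
`e`, for every `d ≥ e` one has `g ∘ D_0^d[I] = D_0^{d-e}[I : ⟨g⟩]`. -/
theorem contract_truncDual_of_homogeneous (n : ℕ) (I : Ideal (MvPolynomial (Fin n) ℂ))
    (hI : ∀ f ∈ I, ∀ d : ℕ, homogeneousComponent d f ∈ I)
    (g : MvPolynomial (Fin n) ℂ) (hg : g ≠ 0) (e : ℕ) (hge : g.IsHomogeneous e)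
    (d : ℕ) (hd : e ≤ d) :
    contract g '' (truncDual d I : Set (MvPolynomial (Fin n) ℂ)) =
      (truncDual (d - e) (Submodule.colon I (Ideal.span {g})) :
        Set (MvPolynomial (Fin n) ℂ)) :=
  contract_truncDual_of_homogeneous_general n I hI g e hge d hd
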